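/- For all real numbers a, b, and φ, the integral over θ in [0, 2π] of e^{i(a cos(θ−φ) − b sin(θ−φ))} dθ equals 2π J₀(a) J₀(b) + 4π ∑_{q=1}^∞ (−1)^q J_{2q}(a) J_{2q}(b). -/

import Mathlib

/-!
Writing `a cos t - b sin t = R cos (t + δ)` with `R = √(a² + b²)` and using periodicity, the
integral becomes `∫₀^{2π} exp (i R cos θ) dθ`; integrating the exponential series termwise
with `∫₀^{2π} cosⁿ θ dθ = 2π C(n, n/2) / 2ⁿ` (`n` even, `0` otherwise) gives `2π J₀(R)`.

What remains is Neumann's addition formula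
`J₀(√(a² + b²)) = ∑_q ε_q (-1)^q J_{2q}(a) J_{2q}(b)`, with `ε₀ = 1` and `ε_q = 2` for `q > 0`,
which is checked on power series. Expanding both Bessel functions gives an absolutely summable
triple series over `(q, r, s)`. Grouping it by `(j, k) = (q + r, q + s)` collapses the sum
over `q` through `∑_q ε_q (-1)^q C(N, j - q) C(N, j + q) = C(N, j)` for `N = j + k`, the
coefficient of `X^{2j}` in `(1 - X)^N (1 + X)^N = (1 - X²)^N`; grouping the result by `j + k`
is the binomial expansion of `(-(a/2)² - (b/2)²)^m`, i.e. the series of `J₀(R)`.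
-/

open Real MeasureTheory

/-- Bessel function of the first kind of order `n`. -/
noncomputable def besselJ (n : ℕ) (x : ℝ) : ℝ :=
  ∑' m : ℕ, (-1 : ℝ) ^ m * (x / 2) ^ (2 * m + n) / (m.factorial * (m + n).factorial)

open Finset

noncomputable def besselTerm (n : ℕ) (x : ℝ) (m : ℕ) : ℝ :=
  (-1 : ℝ) ^ m * (x / 2) ^ (2 * m + n) / (m.factorial * (m + n).factorial)

theorem abs_besselTerm_le (n : ℕ) (x : ℝ) (m : ℕ) :
    |besselTerm n x m| ≤ (|x| / 2) ^ n / n.factorial * (((|x| / 2) ^ 2) ^ m / m.factorial) := by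
  have hfac : (n.factorial : ℝ) ≤ (m + n).factorial := by
    exact_mod_cast Nat.factorial_le (Nat.le_add_left n m)
  rw [besselTerm, abs_div, abs_mul, abs_pow, abs_neg, abs_one, one_pow, one_mul, abs_pow,
    abs_div, abs_two, abs_of_pos (by positivity : (0 : ℝ) < m.factorial * (m + n).factorial),
    div_mul_div_comm, ← pow_mul, ← pow_add, mul_comm (n.factorial : ℝ), add_comm n]
  gcongr

theorem summable_besselTerm (n : ℕ) (x : ℝ) : Summable (besselTerm n x) :=
  .of_norm_bounded ((Real.summable_pow_div_factorial _).mul_left _) (abs_besselTerm_le n x)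

theorem hasSum_besselJ (n : ℕ) (x : ℝ) : HasSum (besselTerm n x) (besselJ n x) :=
  (summable_besselTerm n x).hasSum

theorem integral_exp_int_mul_mul_I (n : ℤ) :
    ∫ θ in (0 : ℝ)..2 * π, Complex.exp (n * θ * Complex.I) =
      if n = 0 then (2 * π : ℂ) else 0 := by
  split_ifs with hn
  · simp [hn]
  have hc : (n * Complex.I : ℂ) ≠ 0 := by simp [hn]
  simp_rw [mul_right_comm _ _ Complex.I]
  rw [integral_exp_mul_complex hc, mul_comm _ ((2 * π : ℝ) : ℂ)]
  push_cast
  rw [show 2 * π * (n * Complex.I) = n * (2 * π * Complex.I) by ring,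
    Complex.exp_int_mul_two_pi_mul_I]
  simp

theorem ofReal_cos_pow_eq_sum (n : ℕ) (θ : ℝ) :
    (cos θ : ℂ) ^ n = ∑ k ∈ range (n + 1),
      (n.choose k / 2 ^ n : ℂ) * Complex.exp ((2 * k - n : ℤ) * θ * Complex.I) := by
  rw [Complex.ofReal_cos, Complex.cos, div_pow, add_pow, sum_div]
  refine sum_congr rfl fun k hk => ?_
  have hk : k ≤ n := Nat.lt_succ_iff.mp (mem_range.mp hk)
  rw [← Complex.exp_nat_mul, ← Complex.exp_nat_mul, ← Complex.exp_add]
  push_cast [hk]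
  ring_nf

theorem integral_ofReal_cos_pow (n : ℕ) :
    ∫ θ in (0 : ℝ)..2 * π, (cos θ : ℂ) ^ n =
      if Even n then 2 * π * (n.choose (n / 2) / 2 ^ n : ℂ) else 0 := by
  simp_rw [ofReal_cos_pow_eq_sum]
  rw [intervalIntegral.integral_finsetSum fun k _ =>
    (by fun_prop : Continuous _).intervalIntegrable _ _]
  simp_rw [intervalIntegral.integral_const_mul, integral_exp_int_mul_mul_I, sub_eq_zero]
  split_ifs with hn
  · obtain ⟨m, rfl⟩ := hn
    have hm : ∀ k : ℕ, (2 * k : ℤ) = (m + m : ℕ) ↔ k = m := fun k => by omega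
    simp only [hm, mul_ite, mul_zero]
    rw [sum_ite_eq' _ m, if_pos (mem_range.mpr (by omega)), show (m + m) / 2 = m by omega]
    ring
  · refine sum_eq_zero fun k _ => ?_
    rw [if_neg fun h => hn ⟨k, by omega⟩, mul_zero]

theorem integral_I_mul_cos_pow_div_factorial (R : ℝ) (n : ℕ) :
    ∫ θ in (0 : ℝ)..2 * π, (Complex.I * ((R * cos θ : ℝ) : ℂ)) ^ n / n.factorial =
      if Even n then 2 * π * (besselTerm 0 R (n / 2) : ℂ) else 0 := by
  have hconst :
      ∫ θ in (0 : ℝ)..2 * π, (Complex.I * ((R * cos θ : ℝ) : ℂ)) ^ n / n.factorial =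
        (Complex.I * R) ^ n / n.factorial * ∫ θ in (0 : ℝ)..2 * π, (cos θ : ℂ) ^ n := by
    rw [← intervalIntegral.integral_const_mul]
    refine intervalIntegral.integral_congr fun θ _ => ?_
    push_cast
    ring
  rw [hconst, integral_ofReal_cos_pow]
  split_ifs with hn
  · obtain ⟨m, rfl⟩ := hn
    rw [← two_mul, Nat.mul_div_cancel_left m two_pos]
    have hfac := Nat.choose_mul_factorial_mul_factorial (Nat.le_mul_of_pos_left m two_pos)
    rw [show 2 * m - m = m by omega] at hfac
    have hc : ((2 * m).choose m : ℂ) ≠ 0 := by exact_mod_cast (Nat.choose_pos (by omega)).ne'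
    rw [← hfac, besselTerm]
    push_cast [add_zero]
    rw [mul_pow, pow_mul, Complex.I_sq, div_pow]
    field_simp
  · rw [mul_zero]

theorem integral_exp_I_mul_cos (R : ℝ) :
    ∫ θ in (0 : ℝ)..2 * π, Complex.exp (Complex.I * ((R * cos θ : ℝ) : ℂ)) =
      2 * π * (besselJ 0 R : ℂ) := by
  have hseries : HasSum (fun n : ℕ => ∫ θ in (0 : ℝ)..2 * π,
      (Complex.I * ((R * cos θ : ℝ) : ℂ)) ^ n / n.factorial)
      (∫ θ in (0 : ℝ)..2 * π, Complex.exp (Complex.I * ((R * cos θ : ℝ) : ℂ))) := by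
    refine intervalIntegral.hasSum_integral_of_dominated_convergence
      (fun n _ => |R| ^ n / n.factorial) (fun n => by fun_prop) (fun n => ?_)
      (.of_forall fun _ _ => Real.summable_pow_div_factorial _) intervalIntegrable_const
      (.of_forall fun θ _ => by
        rw [Complex.exp_eq_exp_ℂ]; exact NormedSpace.expSeries_div_hasSum_exp _)
    refine .of_forall fun θ _ => ?_
    rw [norm_div, norm_pow, norm_mul, Complex.norm_I, one_mul, Complex.norm_real,
      Complex.norm_natCast, norm_mul, norm_eq_abs, norm_eq_abs]
    gcongr
    exact mul_le_of_le_one_right (abs_nonneg R) (abs_cos_le_one θ)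
  simp_rw [integral_I_mul_cos_pow_div_factorial] at hseries
  rw [← (mul_right_injective₀ two_ne_zero).hasSum_iff fun n hn =>
    if_neg fun ⟨k, hk⟩ => hn ⟨k, (two_mul k).trans hk.symm⟩] at hseries
  simp only [Function.comp_def, even_two_mul, if_true, Nat.mul_div_cancel_left _ two_pos]
    at hseries
  exact hseries.unique ((Complex.hasSum_ofReal.mpr (hasSum_besselJ 0 R)).mul_left _)

theorem intervalIntegral_comp_cos_add {E : Type*} [NormedAddCommGroup E] [NormedSpace ℝ E]
    (f : ℝ → E) (c : ℝ) :
    ∫ θ in (0 : ℝ)..2 * π, f (cos (θ + c)) = ∫ θ in (0 : ℝ)..2 * π, f (cos θ) := by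
  have hper : Function.Periodic (fun θ => f (cos θ)) (2 * π) := fun θ => by
    simp only [cos_add_two_pi]
  rw [intervalIntegral.integral_comp_add_right (fun θ => f (cos θ)), zero_add,
    add_comm (2 * π), hper.intervalIntegral_add_eq c 0, zero_add]

theorem mul_cos_sub_mul_sin (a b t : ℝ) :
    a * cos t - b * sin t = √(a ^ 2 + b ^ 2) * cos (t + Complex.arg (a + b * Complex.I)) := by
  set z : ℂ := a + b * Complex.I
  have hnorm : ‖z‖ = √(a ^ 2 + b ^ 2) := by
    rw [Complex.norm_def, Complex.normSq_add_mul_I]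
  calc a * cos t - b * sin t = (z * Complex.exp (t * Complex.I)).re := by
        simp [z, Complex.mul_re, Complex.exp_ofReal_mul_I_re, Complex.exp_ofReal_mul_I_im]
    _ = (‖z‖ * Complex.exp ((t + z.arg : ℝ) * Complex.I)).re := by
        conv_lhs => rw [← Complex.norm_mul_exp_arg_mul_I z]
        rw [mul_assoc, ← Complex.exp_add]
        push_cast
        ring_nf
    _ = √(a ^ 2 + b ^ 2) * cos (t + z.arg) := by
        rw [Complex.re_ofReal_mul, Complex.exp_ofReal_mul_I_re, hnorm]

section
open Polynomial

theorem Polynomial.coeff_one_sub_X_pow {R : Type*} [CommRing R] (N u : ℕ) :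
    ((1 - X : R[X]) ^ N).coeff u = (-1) ^ u * N.choose u := by
  have hterm (k : ℕ) : ((-X : R[X]) ^ k * 1 ^ (N - k) * (N.choose k : R[X])).coeff u =
      if u = k then (-1 : R) ^ u * N.choose u else 0 := by
    rw [one_pow, mul_one, neg_pow, ← C_eq_natCast, coeff_mul_C, ← C_1, ← C_neg, ← C_pow,
      coeff_C_mul, coeff_X_pow]
    split_ifs with h <;> simp [h]
  rw [sub_eq_neg_add, add_pow, finsetSum_coeff]
  simp only [hterm, sum_ite_eq, mem_range]
  split_ifs with h
  · rfl
  · rw [Nat.choose_eq_zero_of_lt (by omega), Nat.cast_zero, mul_zero]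

theorem sum_range_neg_one_pow_mul_choose_mul_choose (N j : ℕ) :
    ∑ u ∈ range (2 * j + 1), (-1 : ℤ) ^ u * N.choose u * N.choose (2 * j - u) =
      (-1) ^ j * N.choose j := by
  have hprod : ((1 - X) ^ N * (1 + X) ^ N : ℤ[X]) = expand ℤ 2 ((1 - X) ^ N) := by
    rw [← mul_pow, map_pow]
    simp only [map_sub, map_one, expand_X]
    ring
  have := congrArg (coeff · (j * 2)) hprod
  simp only [coeff_expand_mul two_pos, coeff_mul, Nat.sum_antidiagonal_eq_sum_range_succ_mk,
    coeff_one_sub_X_pow, coeff_one_add_X_pow] at this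
  rw [mul_comm 2 j, ← this]

end

theorem Finset.sum_range_two_mul_add_one_of_symm {M : Type*} [Semiring M] (g : ℕ → M) (j : ℕ)
    (hg : ∀ q ≤ j, g (j - q) = g (j + q)) :
    ∑ u ∈ range (2 * j + 1), g u =
      ∑ q ∈ range (j + 1), (if q = 0 then 1 else 2) * g (j + q) := by
  have hlow : ∑ u ∈ range j, g u = ∑ q ∈ range j, g (j + (q + 1)) := by
    rw [← sum_range_reflect]
    refine sum_congr rfl fun q hq => ?_
    rw [← hg (q + 1) (mem_range.mp hq), Nat.sub_sub, add_comm 1]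
  rw [show 2 * j + 1 = j + (j + 1) by ring, sum_range_add, hlow, sum_range_succ',
    sum_range_succ' (fun q => _ * _)]
  simp only [add_eq_zero, one_ne_zero, and_false, if_false, if_true, one_mul, two_mul,
    sum_add_distrib, add_assoc]

theorem sum_range_neumann_mul_choose_mul_choose (N j : ℕ) :
    ∑ q ∈ range (j + 1), (if q = 0 then 1 else 2) *
      ((-1 : ℤ) ^ q * N.choose (j - q) * N.choose (j + q)) = N.choose j := by
  set g : ℕ → ℤ := fun u => (-1) ^ u * N.choose u * N.choose (2 * j - u)
  have hsymm (q : ℕ) (hq : q ≤ j) : g (j - q) = g (j + q) := by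
    have hsign : (-1 : ℤ) ^ (j + q) = (-1) ^ (j - q) := by
      rw [show j + q = j - q + 2 * q by omega, pow_add, pow_mul, neg_one_sq, one_pow, mul_one]
    simp only [g, show 2 * j - (j - q) = j + q by omega, show 2 * j - (j + q) = j - q by omega,
      hsign]
    ring
  have hshift (q : ℕ) (hq : q ≤ j) :
      (-1 : ℤ) ^ q * N.choose (j - q) * N.choose (j + q) = (-1) ^ j * g (j + q) := by
    have hsign : (-1 : ℤ) ^ j * (-1) ^ (j + q) = (-1) ^ q := by
      rw [← pow_add, show j + (j + q) = q + 2 * j by omega, pow_add, pow_mul, neg_one_sq, one_pow,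
        mul_one]
    simp only [g, show 2 * j - (j + q) = j - q by omega]
    rw [← hsign]
    ring
  calc _ = (-1) ^ j * ∑ q ∈ range (j + 1), (if q = 0 then 1 else 2) * g (j + q) := by
        rw [mul_sum]
        refine sum_congr rfl fun q hq => ?_
        rw [hshift q (Nat.lt_succ_iff.mp (mem_range.mp hq))]
        ring
    _ = (-1) ^ j * ((-1) ^ j * N.choose j) := by
        rw [← sum_range_two_mul_add_one_of_symm g j hsymm,
          sum_range_neg_one_pow_mul_choose_mul_choose]
    _ = N.choose j := by
        rw [← mul_assoc, ← pow_add, ← two_mul, pow_mul, neg_one_sq, one_pow, one_mul]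

theorem sum_range_neumann_div_factorial (j k : ℕ) :
    ∑ q ∈ range (min j k + 1), (if q = 0 then 1 else 2) * (-1 : ℝ) ^ q /
      ((j - q).factorial * (j + q).factorial * ((k - q).factorial * (k + q).factorial)) =
      1 / (j.factorial * k.factorial * (j + k).factorial) := by
  have hN : ((j + k).factorial : ℝ) ≠ 0 := by positivity
  have hterm (q : ℕ) (hq : q ≤ min j k) :
      (if q = 0 then 1 else 2) * (-1 : ℝ) ^ q /
        ((j - q).factorial * (j + q).factorial * ((k - q).factorial * (k + q).factorial)) =
      ((if q = 0 then 1 else 2) * ((-1 : ℤ) ^ q * (j + k).choose (j - q) * (j + k).choose (j + q))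
        : ℤ) / ((j + k).factorial * (j + k).factorial) := by
    rw [le_min_iff] at hq
    push_cast
    rw [Nat.cast_choose ℝ (by omega : j - q ≤ j + k),
      Nat.cast_choose ℝ (by omega : j + q ≤ j + k),
      show j + k - (j - q) = k + q by omega, show j + k - (j + q) = k - q by omega]
    field_simp
  have hvanish (q : ℕ) (hj : q ∈ range (j + 1)) (hq : q ∉ range (min j k + 1)) :
      ((((if q = 0 then 1 else 2) * ((-1 : ℤ) ^ q * (j + k).choose (j - q) *
        (j + k).choose (j + q)) : ℤ) : ℝ) / ((j + k).factorial * (j + k).factorial)) = 0 := by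
    rw [mem_range, not_lt, Nat.succ_le_iff, min_lt_iff] at hq
    rw [mem_range] at hj
    rw [Nat.choose_eq_zero_of_lt (by omega : j + k < j + q)]
    simp
  rw [sum_congr rfl fun q hq => hterm q (Nat.lt_succ_iff.mp (mem_range.mp hq)),
    sum_subset (range_subset_range.mpr (by omega)) hvanish, ← sum_div, ← Int.cast_sum,
    sum_range_neumann_mul_choose_mul_choose, Int.cast_natCast,
    Nat.cast_choose ℝ (Nat.le_add_right j k), Nat.add_sub_cancel_left]
  field_simp

theorem sum_antidiagonal_pow_mul_pow_div_factorial (x y : ℝ) (m : ℕ) :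
    ∑ jk ∈ antidiagonal m, x ^ jk.1 * y ^ jk.2 /
      (jk.1.factorial * jk.2.factorial * (jk.1 + jk.2).factorial) =
      (x + y) ^ m / (m.factorial * m.factorial) := by
  rw [(Commute.all x y).add_pow', sum_div]
  refine sum_congr rfl fun ⟨j, k⟩ hjk => ?_
  rw [HasAntidiagonal.mem_antidiagonal] at hjk
  subst hjk
  rw [nsmul_eq_mul, Nat.cast_choose ℝ (Nat.le_add_right j k), Nat.add_sub_cancel_left]
  field_simp

section Regrouping

variable {α : Type*} [AddCommMonoid α] [TopologicalSpace α] [ContinuousAdd α] [RegularSpace α]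

theorem HasSum.sum_antidiagonal {A : Type*} [AddCommMonoid A] [HasAntidiagonal A]
    {f : A × A → α} {s : α} (hf : HasSum f s) :
    HasSum (fun n => ∑ kl ∈ antidiagonal n, f kl) s :=
  (HasAntidiagonal.sigmaAntidiagonalEquivProd.hasSum_iff.mpr hf).sigma fun n => by
    rw [← sum_coe_sort]
    exact hasSum_fintype _

theorem HasSum.sum_range_min_succ_sub_sub {f : ℕ × ℕ × ℕ → α} {s : α}
    (hf : HasSum f s) :
    HasSum (fun jk : ℕ × ℕ =>
      ∑ q ∈ range (min jk.1 jk.2 + 1), f (q, jk.1 - q, jk.2 - q)) s := by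
  classical
  let g : (ℕ × ℕ) × ℕ → α := fun x =>
    if x.2 ≤ x.1.1 ∧ x.2 ≤ x.1.2 then f (x.2, x.1.1 - x.2, x.1.2 - x.2) else 0
  let e : ℕ × ℕ × ℕ → (ℕ × ℕ) × ℕ := fun p => ((p.1 + p.2.1, p.1 + p.2.2), p.1)
  have he : Function.Injective e := by
    rintro ⟨q, r, s⟩ ⟨q', r', s'⟩ h
    simp only [e, Prod.mk.injEq] at h ⊢
    omega
  have hge : g ∘ e = f := by
    ext ⟨q, r, s⟩
    simp [g, e]
  have hg : HasSum g s := by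
    have hrange (x : (ℕ × ℕ) × ℕ) (hx : x.2 ≤ x.1.1 ∧ x.2 ≤ x.1.2) :
        x ∈ Set.range e :=
      ⟨(x.2, x.1.1 - x.2, x.1.2 - x.2), by ext <;> simp [e] <;> omega⟩
    rw [← he.hasSum_iff fun x hx => if_neg fun h => hx (hrange x h), hge]
    exact hf
  refine hg.prod_fiberwise fun jk => ?_
  have hfin (q : ℕ) (hq : q ∉ range (min jk.1 jk.2 + 1)) : g (jk, q) = 0 :=
    if_neg fun ⟨h₁, h₂⟩ => hq (mem_range.mpr (Nat.lt_succ_of_le (le_min h₁ h₂)))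
  rw [sum_congr rfl fun q hq =>
    (if_pos (le_min_iff.mp (Nat.lt_succ_iff.mp (mem_range.mp hq)))).symm]
  exact hasSum_sum_of_ne_finset_zero hfin

end Regrouping

theorem pow_div_factorial_mul_pow_div_factorial_le {x y : ℝ} (hx : 0 ≤ x) (hy : 0 ≤ y)
    (n : ℕ) :
    x ^ n / n.factorial * (y ^ n / n.factorial) ≤ (x * y) ^ n / n.factorial := by
  rw [div_mul_div_comm, mul_pow]
  exact div_le_div_of_nonneg_left (by positivity) (by positivity)
    (le_mul_of_one_le_right (by positivity) (by exact_mod_cast n.factorial_pos))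

noncomputable def neumannTerm (a b : ℝ) (p : ℕ × ℕ × ℕ) : ℝ :=
  (if p.1 = 0 then 1 else 2) * (-1) ^ p.1 *
    (besselTerm (2 * p.1) a p.2.1 * besselTerm (2 * p.1) b p.2.2)

theorem summable_neumannTerm (a b : ℝ) : Summable (neumannTerm a b) := by
  set α := |a| / 2
  set β := |b| / 2
  have hdiag : Summable fun q : ℕ => 2 * (α ^ (2 * q) / (2 * q).factorial *
      (β ^ (2 * q) / (2 * q).factorial)) := by
    refine .mul_left 2 (.of_nonneg_of_le (fun q => by positivity)
      (fun q => pow_div_factorial_mul_pow_div_factorial_le (by positivity) (by positivity) _)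
      ((Real.summable_pow_div_factorial (α * β)).comp_injective
        (mul_right_injective₀ two_ne_zero)))
  have hmaj := hdiag.mul_of_nonneg ((Real.summable_pow_div_factorial (α ^ 2)).mul_of_nonneg
    (Real.summable_pow_div_factorial (β ^ 2)) (fun _ => by positivity) (fun _ => by positivity))
    (fun _ => by positivity) (fun _ => by positivity)
  refine .of_norm_bounded hmaj fun ⟨q, r, s⟩ => ?_
  have hε : |(if q = 0 then 1 else 2 : ℝ)| ≤ 2 := by split_ifs <;> norm_num
  calc ‖neumannTerm a b (q, r, s)‖
      = |(if q = 0 then 1 else 2 : ℝ)| *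
          (|besselTerm (2 * q) a r| * |besselTerm (2 * q) b s|) := by
        rw [Real.norm_eq_abs, neumannTerm, abs_mul, abs_mul, abs_mul, abs_neg_one_pow, mul_one]
    _ ≤ 2 * ((α ^ (2 * q) / (2 * q).factorial * ((α ^ 2) ^ r / r.factorial)) *
          (β ^ (2 * q) / (2 * q).factorial * ((β ^ 2) ^ s / s.factorial))) := by
        gcongr
        exacts [abs_besselTerm_le _ _ _, abs_besselTerm_le _ _ _]
    _ = _ := by ring

theorem hasSum_neumannTerm_fiber (a b : ℝ) (q : ℕ) :
    HasSum (fun rs : ℕ × ℕ => neumannTerm a b (q, rs))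
      ((if q = 0 then 1 else 2) * (-1) ^ q * (besselJ (2 * q) a * besselJ (2 * q) b)) :=
  ((hasSum_besselJ _ a).mul (hasSum_besselJ _ b) (summable_mul_of_summable_norm
    (summable_besselTerm _ a).abs (summable_besselTerm _ b).abs)).mul_left _

theorem neumannTerm_sub_sub (a b : ℝ) {j k q : ℕ} (hj : q ≤ j) (hk : q ≤ k) :
    neumannTerm a b (q, j - q, k - q) = (-(a / 2) ^ 2) ^ j * (-(b / 2) ^ 2) ^ k *
      ((if q = 0 then 1 else 2) * (-1) ^ q /
        ((j - q).factorial * (j + q).factorial * ((k - q).factorial * (k + q).factorial))) := by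
  have hsign : (-1 : ℝ) ^ (j - q) * (-1) ^ (k - q) = (-1) ^ j * (-1) ^ k := by
    rw [← pow_add, ← pow_add, show j + k = j - q + (k - q) + 2 * q by omega,
      pow_add (-1 : ℝ) _ (2 * q), pow_mul, neg_one_sq, one_pow, mul_one]
  simp only [neumannTerm, besselTerm, show 2 * (j - q) + 2 * q = 2 * j by omega,
    show 2 * (k - q) + 2 * q = 2 * k by omega, show j - q + 2 * q = j + q by omega,
    show k - q + 2 * q = k + q by omega, pow_mul]
  rw [neg_pow ((a / 2) ^ 2), neg_pow ((b / 2) ^ 2)]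
  field_simp
  linear_combination (a ^ 2 / 2 ^ 2) ^ j * (b ^ 2 / 2 ^ 2) ^ k * hsign

theorem sum_neumannTerm_sub_sub (a b : ℝ) (j k : ℕ) :
    ∑ q ∈ range (min j k + 1), neumannTerm a b (q, j - q, k - q) =
      (-(a / 2) ^ 2) ^ j * (-(b / 2) ^ 2) ^ k /
        (j.factorial * k.factorial * (j + k).factorial) := by
  have hterm (q : ℕ) (hq : q ∈ range (min j k + 1)) := neumannTerm_sub_sub a b
    (le_min_iff.mp (Nat.lt_succ_iff.mp (mem_range.mp hq))).1
    (le_min_iff.mp (Nat.lt_succ_iff.mp (mem_range.mp hq))).2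
  rw [sum_congr rfl hterm, ← mul_sum, sum_range_neumann_div_factorial, mul_one_div]

theorem besselTerm_zero_sqrt (a b : ℝ) (m : ℕ) :
    besselTerm 0 √(a ^ 2 + b ^ 2) m =
      (-(a / 2) ^ 2 + -(b / 2) ^ 2) ^ m / (m.factorial * m.factorial) := by
  have hsq : -(a / 2) ^ 2 + -(b / 2) ^ 2 = -1 * (√(a ^ 2 + b ^ 2) / 2) ^ 2 := by
    linear_combination (1 / 4 : ℝ) * sq_sqrt (by positivity : 0 ≤ a ^ 2 + b ^ 2)
  rw [besselTerm, hsq, mul_pow, ← pow_mul, add_zero, add_zero]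

theorem hasSum_neumann_mul_besselJ_mul_besselJ (a b : ℝ) :
    HasSum (fun q => (if q = 0 then 1 else 2) * (-1) ^ q * (besselJ (2 * q) a * besselJ (2 * q) b))
      (besselJ 0 √(a ^ 2 + b ^ 2)) := by
  have h := (summable_neumannTerm a b).hasSum
  have hJ := h.sum_range_min_succ_sub_sub.sum_antidiagonal
  simp only [sum_neumannTerm_sub_sub, sum_antidiagonal_pow_mul_pow_div_factorial,
    ← besselTerm_zero_sqrt] at hJ
  rw [(hasSum_besselJ 0 _).unique hJ]
  exact h.prod_fiberwise (hasSum_neumannTerm_fiber a b)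

theorem hasSum_neg_one_pow_mul_besselJ_mul_besselJ (a b : ℝ) :
    HasSum (fun q => (-1 : ℝ) ^ (q + 1) * besselJ (2 * (q + 1)) a * besselJ (2 * (q + 1)) b)
      ((besselJ 0 √(a ^ 2 + b ^ 2) - besselJ 0 a * besselJ 0 b) / 2) := by
  have h := ((hasSum_nat_add_iff' 1).mpr (hasSum_neumann_mul_besselJ_mul_besselJ a b)).div_const 2
  simp only [sum_range_one, if_true, Nat.add_eq_zero_iff, one_ne_zero, and_false, if_false,
    mul_zero, pow_zero, one_mul] at h
  exact h.congr_fun fun q => by ring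

theorem integral_exp_bistatic_phase (a b φ : ℝ) :
    (Summable fun q : ℕ =>
      (-1 : ℝ) ^ (q + 1) * besselJ (2 * (q + 1)) a * besselJ (2 * (q + 1)) b) ∧
    (∫ θ in (0 : ℝ)..(2 * π),
        Complex.exp (Complex.I * ((a * Real.cos (θ - φ) - b * Real.sin (θ - φ) : ℝ) : ℂ))) =
      2 * π * besselJ 0 a * besselJ 0 b +
        4 * π * ((∑' q : ℕ,
          (-1 : ℝ) ^ (q + 1) * besselJ (2 * (q + 1)) a * besselJ (2 * (q + 1)) b : ℝ) : ℂ) := by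
  have hseries := hasSum_neg_one_pow_mul_besselJ_mul_besselJ a b
  refine ⟨hseries.summable, ?_⟩
  have hphase (θ : ℝ) : a * cos (θ - φ) - b * sin (θ - φ) =
      √(a ^ 2 + b ^ 2) * cos (θ + (Complex.arg (a + b * Complex.I) - φ)) := by
    rw [mul_cos_sub_mul_sin, sub_add_eq_add_sub, add_sub_assoc']
  simp_rw [hphase]
  rw [intervalIntegral_comp_cos_add
      (fun x => Complex.exp (Complex.I * ((√(a ^ 2 + b ^ 2) * x : ℝ) : ℂ))),
    integral_exp_I_mul_cos, hseries.tsum_eq]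
  push_cast
  ring
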